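/- arXiv:2201.03015 — 5 statements merged into one kernel-verified Lean document; each statement's English description precedes it below -/
import Mathlib

section
/- Let r ≥ 0 be an integer. For every natural number n, the number of partitions of n in which every part whose multiplicity is odd has multiplicity at least 2r + 1 equals the number of partitions of n in which every odd part is congruent to 2r + 1 modulo 4r + 2. -/
/-!
Let `m = 2r + 1`. A partition of the first kind is uniquely `2 • P + m • Q` with `P` arbitrary
and `Q` the set of parts of odd multiplicity, a partition into distinct parts. A partition of
the second kind is uniquely `2 P + m Q` (parts multiplied) with `Q` a partition into odd parts:
its odd parts are exactly the odd multiples of `m`. So both sides count pairs `(P, Q)` with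
`2 |P| + m |Q| = n`, and Euler's theorem, applied to `Q`, matches them.
-/

namespace Multiset

variable {α : Type*} [DecidableEq α]

noncomputable def mapCount (f : ℕ → ℕ) (hf : f 0 = 0) (s : Multiset α) : Multiset α :=
  (Finsupp.mapRange f hf (toFinsupp s)).toMultiset

@[simp]
theorem count_mapCount (f : ℕ → ℕ) (hf : f 0 = 0) (s : Multiset α) (a : α) :
    (s.mapCount f hf).count a = f (s.count a) := by
  simp [mapCount]

theorem mem_of_mem_mapCount {f : ℕ → ℕ} {hf : f 0 = 0} {s : Multiset α} {a : α}
    (h : a ∈ s.mapCount f hf) : a ∈ s := by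
  rw [← count_ne_zero, count_mapCount] at h
  rw [← count_ne_zero]
  intro h0
  exact h (h0 ▸ hf)

theorem map_mul_map_div {k : ℕ} {s : Multiset ℕ} (h : ∀ i ∈ s, k ∣ i) :
    (s.map (· / k)).map (k * ·) = s := by
  rw [map_map]
  exact (map_congr rfl fun i hi => Nat.mul_div_cancel' (h i hi)).trans (map_id' s)

theorem map_div_map_mul {k : ℕ} (hk : 0 < k) (s : Multiset ℕ) :
    (s.map (k * ·)).map (· / k) = s := by
  rw [map_map]
  exact (map_congr rfl fun i _ => Nat.mul_div_cancel_left i hk).trans (map_id' s)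

end Multiset

theorem Nat.mod_two_mul_eq_self_iff {m i : ℕ} (hm : 0 < m) :
    i % (2 * m) = m ↔ m ∣ i ∧ Odd (i / m) := by
  constructor
  · intro h
    have hi : i = m * (2 * (i / (2 * m)) + 1) := by
      have := Nat.div_add_mod i (2 * m); rw [h] at this; linarith
    rw [hi, Nat.mul_div_cancel_left _ hm]
    exact ⟨dvd_mul_right _ _, odd_two_mul_add_one _⟩
  · rintro ⟨⟨q, rfl⟩, k, hk⟩
    rw [Nat.mul_div_cancel_left _ hm] at hk
    rw [hk, mul_add, mul_one, ← mul_assoc, mul_comm m 2, Nat.mul_add_mod_self_left]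
    exact Nat.mod_eq_of_lt (by omega)

theorem Nat.two_mul_add_mul_mod_two {m p q : ℕ} (hm : Odd m) (hq : q ≤ 1) :
    (2 * p + m * q) % 2 = q := by
  obtain ⟨t, rfl⟩ := hm
  interval_cases q <;> omega

theorem Nat.two_mul_div_two_add_mul_mod_two {m c : ℕ} (hm : Odd m) (h : Odd c → m ≤ c) :
    2 * ((c - m * (c % 2)) / 2) + m * (c % 2) = c := by
  obtain ⟨t, rfl⟩ := hm
  rw [Nat.odd_iff] at h
  rcases Nat.mod_two_eq_zero_or_one c with hc | hc
  · rw [hc, mul_zero]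
    omega
  · rw [hc, mul_one]
    have := h hc
    omega

namespace Nat.Partition

open Multiset

abbrev ScaledPair (m n : ℕ) (D : Multiset ℕ → Prop) : Type :=
  Σ ab : {ab : ℕ × ℕ // 2 * ab.1 + m * ab.2 = n},
    ab.1.1.Partition × {q : ab.1.2.Partition // D q.parts}

namespace ScaledPair

variable {m n : ℕ} {D : Multiset ℕ → Prop}

theorem ext {x y : ScaledPair m n D} (h₁ : x.2.1.parts = y.2.1.parts)
    (h₂ : x.2.2.1.parts = y.2.2.1.parts) : x = y := by
  obtain ⟨⟨⟨a, b⟩, _⟩, p, q, _⟩ := x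
  obtain ⟨⟨⟨a', b'⟩, _⟩, p', q', _⟩ := y
  obtain rfl : a = a' := p.parts_sum.symm.trans (h₁ ▸ p'.parts_sum)
  obtain rfl : b = b' := q.parts_sum.symm.trans (h₂ ▸ q'.parts_sum)
  obtain rfl := Nat.Partition.ext h₁
  obtain rfl := Nat.Partition.ext h₂
  rfl

theorem card_congr {D' : Multiset ℕ → Prop}
    (h : ∀ b : ℕ,
      Nat.card {q : b.Partition // D q.parts} = Nat.card {q : b.Partition // D' q.parts}) :
    Nat.card (ScaledPair m n D) = Nat.card (ScaledPair m n D') :=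
  Nat.card_congr <| Equiv.sigmaCongrRight fun _ =>
    Equiv.prodCongr (Equiv.refl _) (Finite.card_eq.mp (h _)).some

end ScaledPair

structure Splitting (m : ℕ) (C D : Multiset ℕ → Prop) where
  fst : Multiset ℕ → Multiset ℕ
  snd : Multiset ℕ → Multiset ℕ
  join : Multiset ℕ → Multiset ℕ → Multiset ℕ
  sum_join (P Q : Multiset ℕ) : (join P Q).sum = 2 * P.sum + m * Q.sum
  join_pos {P Q : Multiset ℕ} :
    (∀ i ∈ P, 0 < i) → (∀ i ∈ Q, 0 < i) → ∀ i ∈ join P Q, 0 < i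
  join_spec {P Q : Multiset ℕ} : D Q → C (join P Q)
  fst_pos {s : Multiset ℕ} : (∀ i ∈ s, 0 < i) → C s → ∀ i ∈ fst s, 0 < i
  snd_pos {s : Multiset ℕ} : (∀ i ∈ s, 0 < i) → C s → ∀ i ∈ snd s, 0 < i
  snd_spec {s : Multiset ℕ} : (∀ i ∈ s, 0 < i) → C s → D (snd s)
  join_fst_snd {s : Multiset ℕ} : C s → join (fst s) (snd s) = s
  fst_join {P Q : Multiset ℕ} : D Q → fst (join P Q) = P
  snd_join {P Q : Multiset ℕ} : D Q → snd (join P Q) = Q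

namespace Splitting

variable {m : ℕ} {C D : Multiset ℕ → Prop}

def equiv (S : Splitting m C D) (n : ℕ) :
    {π : n.Partition // C π.parts} ≃ ScaledPair m n D where
  toFun π :=
    ⟨⟨((S.fst π.1.parts).sum, (S.snd π.1.parts).sum), by
        rw [← S.sum_join, S.join_fst_snd π.2, π.1.parts_sum]⟩,
      ⟨_, S.fst_pos (fun _ => π.1.parts_pos) π.2 _, rfl⟩,
      ⟨_, S.snd_pos (fun _ => π.1.parts_pos) π.2 _, rfl⟩,
      S.snd_spec (fun _ => π.1.parts_pos) π.2⟩
  invFun x :=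
    ⟨⟨S.join x.2.1.parts x.2.2.1.parts,
        S.join_pos (fun _ => x.2.1.parts_pos) (fun _ => x.2.2.1.parts_pos) _, by
        rw [S.sum_join, x.2.1.parts_sum, x.2.2.1.parts_sum, x.1.2]⟩,
      S.join_spec x.2.2.2⟩
  left_inv π := Subtype.ext (Nat.Partition.ext (S.join_fst_snd π.2))
  right_inv x := ScaledPair.ext (S.fst_join x.2.2.2) (S.snd_join x.2.2.2)

end Splitting

def OddCountsAtLeast (m : ℕ) (s : Multiset ℕ) : Prop :=
  ∀ i ∈ s, Odd (s.count i) → m ≤ s.count i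

def OddPartsModEq (m : ℕ) (s : Multiset ℕ) : Prop :=
  ∀ i ∈ s, Odd i → i % (2 * m) = m

/-- `s = 2 • P + m • Q` with `Q` the set of elements of odd multiplicity; as `m` is odd, the
parity of a multiplicity `2 p + m q` with `q ≤ 1` recovers `q`. -/
noncomputable def countSplitting {m : ℕ} (hm : Odd m) :
    Splitting m (OddCountsAtLeast m) Nodup where
  fst s := s.mapCount (fun c => (c - m * (c % 2)) / 2) (by simp)
  snd s := s.mapCount (· % 2) rfl
  join P Q := 2 • P + m • Q
  sum_join P Q := by simp only [sum_add, sum_nsmul, smul_eq_mul]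
  join_pos hP hQ i hi := by
    rcases mem_add.mp hi with hi | hi
    · exact hP i (mem_of_mem_nsmul hi)
    · exact hQ i (mem_of_mem_nsmul hi)
  join_spec {P Q} hQ i _ hodd := by
    rw [Multiset.count_add, Multiset.count_nsmul, Multiset.count_nsmul] at hodd ⊢
    have hq := Nat.two_mul_add_mul_mod_two (p := P.count i) hm (nodup_iff_count_le_one.mp hQ i)
    rw [Nat.odd_iff.mp hodd] at hq
    rw [← hq, mul_one]
    exact Nat.le_add_left _ _
  fst_pos hs _ i hi := hs i (mem_of_mem_mapCount hi)
  snd_pos hs _ i hi := hs i (mem_of_mem_mapCount hi)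
  snd_spec _ _ := nodup_iff_count_le_one.mpr fun i => by
    simpa using Nat.le_of_lt_succ (Nat.mod_lt _ two_pos)
  join_fst_snd {s} hs := by
    ext i
    simp only [Multiset.count_add, Multiset.count_nsmul, count_mapCount]
    refine Nat.two_mul_div_two_add_mul_mod_two hm fun hodd => hs i ?_ hodd
    exact count_pos.mp hodd.pos
  fst_join {P Q} hQ := by
    ext i
    simp only [Multiset.count_add, Multiset.count_nsmul, count_mapCount,
      Nat.two_mul_add_mul_mod_two hm (nodup_iff_count_le_one.mp hQ i), Nat.add_sub_cancel]
    omega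
  snd_join {P Q} hQ := by
    ext i
    simp only [Multiset.count_add, Multiset.count_nsmul, count_mapCount,
      Nat.two_mul_add_mul_mod_two hm (nodup_iff_count_le_one.mp hQ i)]

/-- `s = 2 P + m Q`: as `m` is odd, `2 P` and `m Q` are the even and the odd parts of `s`. -/
def partSplitting {m : ℕ} (hm : Odd m) :
    Splitting m (OddPartsModEq m) (fun s => ∀ i ∈ s, Odd i) where
  fst s := (s.filter Even).map (· / 2)
  snd s := (s.filter Odd).map (· / m)
  join P Q := P.map (2 * ·) + Q.map (m * ·)
  sum_join P Q := by
    rw [sum_add, sum_map_mul_left, sum_map_mul_left, map_id', map_id']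
  join_pos hP hQ i hi := by
    rcases mem_add.mp hi with hi | hi <;> obtain ⟨j, hj, rfl⟩ := mem_map.mp hi
    · exact Nat.mul_pos two_pos (hP j hj)
    · exact Nat.mul_pos hm.pos (hQ j hj)
  join_spec {P Q} hQ i hi hodd := by
    rcases mem_add.mp hi with hi | hi <;> obtain ⟨j, hj, rfl⟩ := mem_map.mp hi
    · exact absurd (even_two_mul j) (Nat.not_even_iff_odd.mpr hodd)
    · rw [Nat.mod_two_mul_eq_self_iff hm.pos, Nat.mul_div_cancel_left _ hm.pos]
      exact ⟨dvd_mul_right _ _, hQ j hj⟩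
  fst_pos hs _ i hi := by
    obtain ⟨j, hj, rfl⟩ := mem_map.mp hi
    obtain ⟨hjs, k, rfl⟩ := mem_filter.mp hj
    have := hs _ hjs
    omega
  snd_pos _ hC i hi := by
    obtain ⟨j, hj, rfl⟩ := mem_map.mp hi
    obtain ⟨hjs, hodd⟩ := mem_filter.mp hj
    exact ((Nat.mod_two_mul_eq_self_iff hm.pos).mp (hC j hjs hodd)).2.pos
  snd_spec _ hC i hi := by
    obtain ⟨j, hj, rfl⟩ := mem_map.mp hi
    obtain ⟨hjs, hodd⟩ := mem_filter.mp hj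
    exact ((Nat.mod_two_mul_eq_self_iff hm.pos).mp (hC j hjs hodd)).2
  join_fst_snd {s} hC := by
    rw [map_mul_map_div, map_mul_map_div]
    · simpa only [Nat.not_even_iff_odd] using filter_add_not Even s
    · intro i hi
      obtain ⟨hjs, hodd⟩ := mem_filter.mp hi
      exact ((Nat.mod_two_mul_eq_self_iff hm.pos).mp (hC i hjs hodd)).1
    · intro i hi
      exact even_iff_two_dvd.mp (mem_filter.mp hi).2
  fst_join {P Q} hQ := by
    rw [filter_add, filter_eq_self.mpr, filter_eq_nil.mpr, add_zero, map_div_map_mul two_pos]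
    · intro i hi
      obtain ⟨j, hj, rfl⟩ := mem_map.mp hi
      exact Nat.not_even_iff_odd.mpr (hm.mul (hQ j hj))
    · intro i hi
      obtain ⟨j, hj, rfl⟩ := mem_map.mp hi
      exact even_two_mul j
  snd_join {P Q} hQ := by
    rw [filter_add, filter_eq_nil.mpr, filter_eq_self.mpr, zero_add, map_div_map_mul hm.pos]
    · intro i hi
      obtain ⟨j, hj, rfl⟩ := mem_map.mp hi
      exact hm.mul (hQ j hj)
    · intro i hi
      obtain ⟨j, hj, rfl⟩ := mem_map.mp hi
      exact Nat.not_odd_iff_even.mpr (even_two_mul j)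

theorem card_nodup_eq_card_odd (b : ℕ) :
    Nat.card {q : b.Partition // q.parts.Nodup} =
      Nat.card {q : b.Partition // ∀ i ∈ q.parts, Odd i} := by
  simp only [Nat.card_eq_fintype_card, Fintype.card_subtype]
  simpa [odds, distincts, restricted] using (card_odds_eq_card_distincts b).symm

theorem card_oddCountsAtLeast_eq_card_oddPartsModEq {m : ℕ} (hm : Odd m) (n : ℕ) :
    Nat.card {π : n.Partition // OddCountsAtLeast m π.parts} =
      Nat.card {π : n.Partition // OddPartsModEq m π.parts} := by
  rw [Nat.card_congr ((countSplitting hm).equiv n), Nat.card_congr ((partSplitting hm).equiv n)]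
  exact ScaledPair.card_congr card_nodup_eq_card_odd

end Nat.Partition

/-- **Andrews' generalization of MacMahon's theorem.** For `r ≥ 0`, the number of
partitions of `n` in which every part whose multiplicity is odd has multiplicity at least
`2r + 1` equals the number of partitions of `n` in which every odd part is congruent to
`2r + 1` modulo `4r + 2`. -/
theorem andrews_macmahon (r : ℕ) (n : ℕ) :
    Nat.card {π : n.Partition //
      ∀ i ∈ π.parts, Odd (π.parts.count i) → 2 * r + 1 ≤ π.parts.count i} =
    Nat.card {π : n.Partition //
      ∀ i ∈ π.parts, Odd i → i % (4 * r + 2) = 2 * r + 1} := by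
  have h := Nat.Partition.card_oddCountsAtLeast_eq_card_oddPartsModEq (odd_two_mul_add_one r) n
  simpa only [Nat.Partition.OddCountsAtLeast, Nat.Partition.OddPartsModEq,
    show 2 * (2 * r + 1) = 4 * r + 2 by ring] using h
end

section
/- For all natural numbers n, the number of partitions of n in which every multiplicity that is congruent to ja modulo p for some 0 ≤ j ≤ p − 1 is at least j(pr + a), equals the number of partitions of n in which every part not divisible by p is congruent to −s(pr + a) modulo p²r + pa for some s ∈ {1, 2, …, p − 1}. -/
/-!
Put `d = p * r + a`, which is coprime to `p` and congruent to `a` modulo `p`. A multiplicity `c`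
satisfies the condition on the left exactly when `c = d * j + p * u` with `j < p`, i.e. when `c`
lies in the numerical semigroup `⟨p, d⟩`; a part satisfies the condition on the right exactly when
it is divisible by `p` or by `d`. Since `p` and `d` are coprime,
`∑_{c ∈ ⟨p, d⟩} y ^ c = (1 - y ^ (p * d)) / ((1 - y ^ p) * (1 - y ^ d))`, so after multiplication by
`∏_m (1 - q ^ (p * m)) * (1 - q ^ (d * m))` both generating functions become
`∏_m (1 - q ^ (p * d * m))`: on the right, a factor `1 / (1 - q ^ m)` survives exactly when
`p * d ∣ m`.
-/

open Finset PowerSeries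
open scoped PowerSeries.WithPiTopology

theorem hasProd_ite_dvd_iff {M : Type*} [CommMonoid M] [TopologicalSpace M] (g : ℕ → M) {k : ℕ}
    (hk : k ≠ 0) {a : M} :
    HasProd (fun i ↦ if k ∣ i + 1 then g (i + 1) else 1) a ↔
      HasProd (fun i ↦ g (k * (i + 1))) a := by
  have hinj : Function.Injective fun i ↦ k * i + (k - 1) := fun i j h ↦ by
    simpa [hk] using Nat.add_right_cancel h
  rw [← hinj.hasProd_iff]
  · congr! 1
    funext i
    have : k * i + (k - 1) + 1 = k * (i + 1) := by rw [mul_add_one]; omega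
    simp [this]
  · intro j hj
    rw [if_neg]
    rintro ⟨_ | i, hi⟩
    · simp at hi
    · exact hj ⟨i, by simp only; rw [mul_add_one] at hi; omega⟩

theorem ite_or_mul_ite_mul_ite {R : Type*} [CommRing R] (P Q : Prop) [Decidable P] [Decidable Q]
    {g y : R} (hg : g * (1 - y) = 1) :
    (if P ∨ Q then g else 1) * ((if P then 1 - y else 1) * (if Q then 1 - y else 1)) =
      if P ∧ Q then 1 - y else 1 := by
  by_cases hP : P <;> by_cases hQ : Q <;> simp [hP, hQ, hg, ← mul_assoc]

namespace Nat

theorem mem_closure_pair_iff_exists_lt {p d c : ℕ} (hp : p ≠ 0) :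
    c ∈ AddSubmonoid.closure ({p, d} : Set ℕ) ↔ ∃ j < p, d * j ≤ c ∧ d * j ≡ c [MOD p] := by
  rw [AddSubmonoid.mem_closure_pair]
  constructor
  · rintro ⟨x, y, rfl⟩
    refine ⟨y % p, mod_lt _ (pos_of_ne_zero hp), ?_, ?_⟩
    · simp only [smul_eq_mul]
      nlinarith [mod_le y p]
    · calc d * (y % p) ≡ d * y [MOD p] := (mod_modEq y p).mul_left d
        _ ≡ x • p + y • d [MOD p] := by simp [ModEq, mul_comm]
  · rintro ⟨j, -, hle, hmod⟩
    obtain ⟨u, hu⟩ := (modEq_iff_dvd' hle).1 hmod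
    exact ⟨u, j, by rw [smul_eq_mul, smul_eq_mul, mul_comm u, mul_comm j]; omega⟩

theorem eq_of_mul_modEq_mul {p d j j' : ℕ} (hpd : p.Coprime d) (hj : j < p) (hj' : j' < p)
    (h : d * j ≡ d * j' [MOD p]) : j = j' :=
  (ModEq.cancel_left_of_coprime hpd h).eq_of_lt_of_lt hj hj'

open Classical in
theorem card_filter_range_mul_modEq {p d : ℕ} (hp : p ≠ 0) (hpd : p.Coprime d) (c : ℕ) :
    #{j ∈ range p | d * j ≤ c ∧ d * j ≡ c [MOD p]} =
      if c ∈ AddSubmonoid.closure ({p, d} : Set ℕ) then 1 else 0 := by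
  split_ifs with hc
  · obtain ⟨j, hj, hjc⟩ := (mem_closure_pair_iff_exists_lt hp).1 hc
    rw [Finset.card_eq_one]
    refine ⟨j, eq_singleton_iff_unique_mem.2 ⟨by simp [hj, hjc], fun j' hj' ↦ ?_⟩⟩
    simp only [mem_filter, mem_range] at hj'
    exact eq_of_mul_modEq_mul hpd hj'.1 hj (hj'.2.2.trans hjc.2.symm)
  · rw [Finset.card_eq_zero, filter_eq_empty_iff]
    exact fun j hj hjc ↦ hc ((mem_closure_pair_iff_exists_lt hp).2 ⟨j, mem_range.1 hj, hjc⟩)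

theorem forall_modEq_mul_imp_mul_le_iff {p d a : ℕ} (hp : p ≠ 0) (hpd : p.Coprime d)
    (hda : d ≡ a [MOD p]) (c : ℕ) :
    (∀ j ≤ p - 1, c ≡ j * a [MOD p] → j * d ≤ c) ↔
      c ∈ AddSubmonoid.closure ({p, d} : Set ℕ) := by
  have hmodEq (j : ℕ) : c ≡ j * a [MOD p] ↔ d * j ≡ c [MOD p] := by
    rw [ModEq.comm, mul_comm d]
    exact ⟨(hda.mul_left j).trans, (hda.mul_left j).symm.trans⟩
  rw [mem_closure_pair_iff_exists_lt hp]
  constructor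
  · intro h
    obtain ⟨j, hj, hjc⟩ := exists_mul_mod_eq_of_coprime c hpd.symm hp
    exact ⟨j, hj, mul_comm d j ▸ h j (by omega) ((hmodEq j).2 hjc), hjc⟩
  · rintro ⟨j', hj', hle, hmod⟩ j hj hcj
    rwa [eq_of_mul_modEq_mul hpd (by omega) hj' (((hmodEq j).1 hcj).trans hmod.symm), mul_comm]

theorem imp_exists_intModEq_iff_dvd_or_dvd {p : ℕ} (hp : p ≠ 0) (d i : ℕ) :
    (¬ p ∣ i → ∃ s : ℕ, 1 ≤ s ∧ s ≤ p - 1 ∧ (i : ℤ) ≡ -(s * d) [ZMOD p * d]) ↔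
      p ∣ i ∨ d ∣ i := by
  rw [← or_iff_not_imp_left]
  refine or_congr_right' fun hpi ↦ ⟨fun ⟨s, _, _, hs⟩ ↦ ?_, ?_⟩
  · have hi : (i : ℤ) ≡ 0 [ZMOD d] :=
      (hs.of_mul_left p).trans (Int.modEq_zero_iff_dvd.2 (dvd_neg.2 (dvd_mul_left _ _)))
    exact Int.natCast_dvd_natCast.1 (Int.modEq_zero_iff_dvd.1 hi)
  · rintro ⟨k, rfl⟩
    have hk : k % p ≠ 0 := fun h ↦ hpi (dvd_mul_of_dvd_right (dvd_of_mod_eq_zero h) d)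
    obtain ⟨q, r, hr, hrp, rfl⟩ : ∃ q r, r ≠ 0 ∧ r < p ∧ k = p * q + r :=
      ⟨k / p, k % p, hk, mod_lt _ (pos_of_ne_zero hp), (div_add_mod k p).symm⟩
    refine ⟨p - r, by omega, by omega, Int.modEq_iff_dvd.2 ⟨-(q + 1 : ℕ), ?_⟩⟩
    push_cast [Nat.cast_sub hrp.le]
    ring

end Nat

namespace PowerSeries

open Classical in
theorem mk_mem_closure_pair_mul_eq {R : Type*} [CommRing R] {p d : ℕ} (hp : p ≠ 0)
    (hpd : p.Coprime d) :
    (mk fun c ↦ if c ∈ AddSubmonoid.closure ({p, d} : Set ℕ) then (1 : R) else 0) *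
      ((1 - X ^ p) * (1 - X ^ d)) = 1 - X ^ (p * d) := by
  have hsplit : (mk fun c ↦ if c ∈ AddSubmonoid.closure ({p, d} : Set ℕ) then (1 : R) else 0) =
      (∑ j ∈ range p, (X ^ d) ^ j) * expand p hp (mk 1) := by
    ext c
    simp_rw [coeff_mk, sum_mul, map_sum, ← pow_mul, coeff_X_pow_mul', coeff_expand, coeff_mk,
      Pi.one_apply, ← ite_and]
    have hfilter : {j ∈ range p | d * j ≤ c ∧ p ∣ c - d * j} =
        {j ∈ range p | d * j ≤ c ∧ d * j ≡ c [MOD p]} :=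
      filter_congr fun j _ ↦ and_congr_right fun h ↦ (Nat.modEq_iff_dvd' h).symm
    rw [sum_boole, hfilter, Nat.card_filter_range_mul_modEq hp hpd c]
    push_cast
    rfl
  have hgeom : expand p hp (mk 1 : R⟦X⟧) * (1 - X ^ p) = 1 := by
    simpa using congr(expand p hp $(mk_one_mul_one_sub_eq_one R))
  calc _ = ((∑ j ∈ range p, (X ^ d : R⟦X⟧) ^ j) * (1 - X ^ d)) *
        (expand p hp (mk 1) * (1 - X ^ p)) := by
        rw [hsplit]; ring
    _ = 1 - X ^ (p * d) := by rw [geom_sum_mul_neg, hgeom, mul_one, ← pow_mul, mul_comm]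

namespace WithPiTopology

variable {R : Type*} [CommRing R] [TopologicalSpace R]

theorem continuous_expand (k : ℕ) (hk : k ≠ 0) : Continuous (expand k hk : R⟦X⟧ → R⟦X⟧) := by
  refine continuous_iff_continuousAt.2 fun φ ↦ ?_
  rw [ContinuousAt, tendsto_iff_coeff_tendsto]
  intro n
  simp only [coeff_expand]
  split_ifs
  · exact (continuous_coeff R _).tendsto φ
  · exact tendsto_const_nhds

theorem hasSum_expand_mk (k : ℕ) (hk : k ≠ 0) (w : ℕ → R) :
    HasSum (fun c ↦ w c • (X : R⟦X⟧) ^ (k * c)) (expand k hk (mk w)) := by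
  rw [hasSum_iff_hasSum_coeff]
  intro n
  simp only [coeff_smul, coeff_X_pow, coeff_expand, coeff_mk, smul_eq_mul, mul_ite, mul_one,
    mul_zero]
  split_ifs with h
  · obtain ⟨c, rfl⟩ := h
    rw [Nat.mul_div_cancel_left _ (Nat.pos_of_ne_zero hk)]
    convert hasSum_ite_eq c (w c) using 2 with c'
    by_cases h : c = c' <;> simp [h, hk, eq_comm]
  · convert hasSum_zero with c
    rw [if_neg]
    rintro rfl
    exact h (dvd_mul_right k c)

theorem hasProd_one_sub_X_pow_mul (k : ℕ) (hk : k ≠ 0) :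
    HasProd (fun i ↦ (1 : R⟦X⟧) - X ^ (k * (i + 1))) (expand k hk (∏' i, (1 - X ^ (i + 1)))) := by
  convert (multipliable_one_sub_X_pow R).hasProd.map (expand k hk) (continuous_expand k hk) using 1
  ext i : 1
  simp [pow_mul]

end WithPiTopology

end PowerSeries

namespace Nat.Partition

open PowerSeries.WithPiTopology

theorem hasProd_powerSeriesMk_card_count_mem {R : Type*} [CommRing R] [TopologicalSpace R]
    [IsTopologicalRing R] [T2Space R] (M : Set ℕ) [DecidablePred (· ∈ M)] (hM : 0 ∈ M) :
    HasProd
      (fun i ↦ expand (i + 1) i.succ_ne_zero (PowerSeries.mk fun c ↦ if c ∈ M then (1 : R) else 0))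
      (PowerSeries.mk fun n ↦ (#{π : n.Partition | ∀ i ∈ π.parts, π.parts.count i ∈ M} : R)) := by
  convert! hasProd_genFun (fun _ c ↦ if c ∈ M then (1 : R) else 0) using 1
  · ext1 i
    have h := hasSum_expand_mk (i + 1) i.succ_ne_zero (fun c ↦ if c ∈ M then (1 : R) else 0)
    rw [← hasSum_nat_add_iff' 1, sum_range_one] at h
    rw [h.tsum_eq]
    simp [hM]
  · simp_rw [genFun, card_filter, Finsupp.prod, prod_boole]
    simp

theorem card_count_mem_closure_pair_eq_card_dvd_or_dvd {p d : ℕ} (hp : p ≠ 0) (hd : d ≠ 0)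
    (hpd : p.Coprime d) (n : ℕ) :
    Nat.card {π : n.Partition //
        ∀ i ∈ π.parts, π.parts.count i ∈ AddSubmonoid.closure ({p, d} : Set ℕ)} =
      Nat.card {π : n.Partition // ∀ i ∈ π.parts, p ∣ i ∨ d ∣ i} := by
  classical
  let W : ℤ⟦X⟧ := ∏' i, (1 - X ^ (i + 1))
  have hdvd (k : ℕ) (hk : k ≠ 0) :
      HasProd (fun i ↦ if k ∣ i + 1 then (1 : ℤ⟦X⟧) - X ^ (i + 1) else 1) (expand k hk W) :=
    (hasProd_ite_dvd_iff (fun m ↦ 1 - X ^ m) hk).2 (hasProd_one_sub_X_pow_mul k hk)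
  have hB := ((hasProd_powerSeriesMk_card_count_mem (R := ℤ) _
      (AddSubmonoid.closure ({p, d} : Set ℕ)).zero_mem).mul
      ((hasProd_one_sub_X_pow_mul p hp).mul (hasProd_one_sub_X_pow_mul d hd))).congr_fun
      (g := fun i ↦ 1 - X ^ (p * d * (i + 1))) fun i ↦ by
    simpa [← pow_mul, mul_comm] using
      congr(expand (i + 1) i.succ_ne_zero $(mk_mem_closure_pair_mul_eq (R := ℤ) hp hpd)).symm
  have hE := ((hasProd_powerSeriesMk_card_restricted ℤ (fun i ↦ p ∣ i ∨ d ∣ i)).mul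
      ((hdvd p hp).mul (hdvd d hd))).congr_fun
      (g := fun i ↦ if p * d ∣ i + 1 then 1 - X ^ (i + 1) else 1) fun i ↦ by
    have hgeom : (∑' j, (X : ℤ⟦X⟧) ^ ((i + 1) * j)) * (1 - X ^ (i + 1)) = 1 := by
      simpa [pow_mul] using tsum_pow_mul_one_sub_of_constantCoeff_eq_zero (R := ℤ)
        (f := X ^ (i + 1)) (by simp)
    rw [ite_or_mul_ite_mul_ite _ _ hgeom]
    exact if_congr ⟨fun h ↦ ⟨dvd_of_mul_right_dvd h, dvd_of_mul_left_dvd h⟩,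
      fun h ↦ hpd.mul_dvd_of_dvd_of_dvd h.1 h.2⟩ rfl rfl
  have hexpand (k : ℕ) (hk : k ≠ 0) : expand k hk W ≠ 0 := fun h ↦
    tprod_one_sub_X_pow_ne_zero ℤ <| ext fun m ↦ by
      rw [← coeff_expand_mul k hk, h, map_zero, map_zero]
  have h := mul_right_cancel₀ (mul_ne_zero (hexpand p hp) (hexpand d hd))
    (hB.unique ((hasProd_ite_dvd_iff (fun m ↦ 1 - X ^ m) (mul_ne_zero hp hd)).1 hE))
  have hcoeff := congr(coeff n $h)
  simp only [SetLike.mem_coe, coeff_mk, Nat.cast_inj] at hcoeff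
  rw [Nat.card_eq_fintype_card, Nat.card_eq_fintype_card, Fintype.card_subtype,
    Fintype.card_subtype]
  exact hcoeff

end Nat.Partition

/-- **Extension of Andrews' theorem (the case `m = ∞`).** Let `p, a` be positive coprime
integers and `r ≥ 0`. The number of partitions of `n` in which every multiplicity that is
congruent to `j·a (mod p)` for some `0 ≤ j ≤ p - 1` is at least `j(pr + a)` equals the
number of partitions of `n` in which every part not divisible by `p` is congruent to
`-s(pr + a) (mod p²r + pa)` for some `s ∈ {1, …, p - 1}`. -/
theorem b_infty_eq_e_infty (p a r : ℕ) (hp : 0 < p) (ha : 0 < a)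
    (hco : Nat.gcd a p = 1) (n : ℕ) :
    Nat.card {π : n.Partition //
      ∀ i ∈ π.parts, ∀ j ≤ p - 1,
        π.parts.count i ≡ j * a [MOD p] → j * (p * r + a) ≤ π.parts.count i} =
    Nat.card {π : n.Partition //
      ∀ i ∈ π.parts, ¬ p ∣ i → ∃ s, 1 ≤ s ∧ s ≤ p - 1 ∧
        (i : ℤ) ≡ -(s * (p * r + a)) [ZMOD ((p : ℤ) ^ 2 * r + p * a)]} := by
  have hpd : p.Coprime (p * r + a) := by simpa [Nat.Coprime, Nat.gcd_comm] using hco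
  have hda : p * r + a ≡ a [MOD p] := by simp [Nat.ModEq]
  have hmod : ((p : ℤ) ^ 2 * r + p * a) = p * ((p * r + a : ℕ) : ℤ) := by push_cast; ring
  have hd : ((p : ℤ) * r + a) = ((p * r + a : ℕ) : ℤ) := by push_cast; ring
  simp_rw [Nat.forall_modEq_mul_imp_mul_le_iff hp.ne' hpd hda, hmod, hd,
    Nat.imp_exists_intModEq_iff_dvd_or_dvd hp.ne']
  exact Nat.Partition.card_count_mem_closure_pair_eq_card_dvd_or_dvd hp.ne' (by omega) hpd n
end

section
/- Let p > 3 be prime, let a be a positive integer not divisible by p, let r ≥ 0 and m ≥ 1 be integers, and let t be an integer with 0 ≤ t < p such that 24·t·a⁻¹ + 1 is a quadratic nonresidue modulo p, where a⁻¹ denotes the multiplicative inverse of a modulo p. Then for all n ≥ 0, b_{2,r,a,m}(pn + t) ≡ 0 (mod 2). -/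
/-- `b p a r m v n` is the number of partitions of `n` such that for every part, its
multiplicity is congruent to `j·a (mod p)` for some `0 ≤ j ≤ v - 1` and satisfies
`j(pr + a) ≤ multiplicity ≤ j(pr + a) + p(m - 1)`. -/
noncomputable def b (p a r m v n : ℕ) : ℕ :=
  Nat.card {π : n.Partition //
    ∀ i ∈ π.parts, ∃ j, j < v ∧
      π.parts.count i ≡ j * a [MOD p] ∧
      j * (p * r + a) ≤ π.parts.count i ∧
      π.parts.count i ≤ j * (p * r + a) + p * (m - 1)}

/-!
Over `ZMod 2`, with `q = p r + a`, the generating function of the partitions counted by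
`b p a r m 2` factors as `∏ᵢ (1 + X^{q i}) · G`, where `G` counts partitions all of whose
multiplicities lie in `{0, p, …, p(m - 1)}`, so that only exponents divisible by `p` occur in `G`.
Modulo 2 the first factor is `∏ᵢ (1 - X^{q i})`, whose exponents are, by Euler's pentagonal number
theorem, the numbers `q · k(3k - 1)/2`. A nonzero coefficient at `p n + t` would therefore force
`t ≡ a · k(3k - 1)/2 (mod p)`, and then `24 t a⁻¹ + 1 = (6k - 1)²` would be a square mod `p`.
-/

open PowerSeries PowerSeries.WithPiTopology

section GenFun

variable {R : Type*} [CommRing R]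

theorem PowerSeries.WithPiTopology.continuous_expand_s6 [TopologicalSpace R] (q : ℕ) (hq : q ≠ 0) :
    Continuous (expand q hq : R⟦X⟧ → R⟦X⟧) := by
  refine continuous_pi fun d => ?_
  rw [show d = Finsupp.single () (d ()) by ext; simp]
  change Continuous fun φ => coeff (d ()) (expand q hq φ)
  simp_rw [coeff_expand]
  split_ifs
  · exact continuous_coeff R _
  · exact continuous_const

theorem PowerSeries.WithPiTopology.one_add_tsum_smul_X_pow_eq_expand [TopologicalSpace R]
    [IsTopologicalRing R] [T2Space R] (f : ℕ → R) (hf : f 0 = 1) (n : ℕ) (hn : n ≠ 0) :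
    1 + ∑' j, f (j + 1) • X ^ (n * (j + 1)) = expand n hn (PowerSeries.mk f) := by
  have hs :=
    (hasSum_of_monomials_self (PowerSeries.mk f)).map (expand n hn) (continuous_expand_s6 n hn)
  rw [← hs.tsum_eq, hs.summable.tsum_eq_zero_add]
  simp [hf, monomial_eq_C_mul_X_pow, smul_eq_C_mul, expand_C, pow_mul]

theorem Nat.Partition.hasProd_expand_mk_genFun [TopologicalSpace R] [IsTopologicalRing R]
    [T2Space R] (f : ℕ → R) (hf : f 0 = 1) :
    HasProd (fun i => expand (i + 1) i.succ_ne_zero (PowerSeries.mk f))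
      (genFun fun _ c => f c) := by
  have h i := one_add_tsum_smul_X_pow_eq_expand f hf (i + 1) i.succ_ne_zero
  simpa only [h] using hasProd_genFun (fun _ c => f c)

theorem Nat.Partition.genFun_sub_shift_eq_expand_pentagonalSeries_mul (g : ℕ → R) (hg : g 0 = 1)
    (q : ℕ) (hq : q ≠ 0) :
    genFun (fun _ c => g c - if q ≤ c then g (c - q) else 0) =
      expand q hq (pentagonalSeries R) * genFun fun _ c => g c := by
  let : TopologicalSpace R := ⊥
  have : DiscreteTopology R := ⟨rfl⟩
  have hshift : PowerSeries.mk (fun c => g c - if q ≤ c then g (c - q) else 0) =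
      (1 - X ^ q) * PowerSeries.mk g := by
    ext c
    simp [sub_mul, coeff_X_pow_mul']
  refine (hasProd_expand_mk_genFun _ (by simp [hg, hq])).unique ?_
  convert ((hasProd_one_sub_X_pow R).map (expand q hq) (continuous_expand_s6 q hq)).mul
    (hasProd_expand_mk_genFun g hg) using 1
  funext i
  simp [hshift, ← pow_mul, mul_comm]

theorem Nat.Partition.natCast_card_eq_coeff_genFun (P : ℕ → Prop) [DecidablePred P] (n : ℕ) :
    (Nat.card {π : n.Partition // ∀ i ∈ π.parts, P (π.parts.count i)} : R) =
      coeff n (genFun fun _ c => if P c then (1 : R) else 0) := by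
  simp_rw [coeff_genFun, Finsupp.prod, Finset.prod_boole, Finset.sum_boole,
    Nat.card_eq_fintype_card, Fintype.card_subtype, Multiset.toFinsupp_support,
    Multiset.toFinsupp_apply, Multiset.mem_toFinset]

theorem Nat.Partition.coeff_genFun_eq_zero_of_not_dvd {p n : ℕ} (f : ℕ → R)
    (hf : ∀ c, ¬ p ∣ c → f c = 0) (hn : ¬ p ∣ n) : coeff n (genFun fun _ c => f c) = 0 := by
  rw [coeff_genFun]
  refine Finset.sum_eq_zero fun π _ => ?_
  obtain ⟨i, hi, hpi⟩ : ∃ i ∈ π.parts.toFinset, ¬ p ∣ π.parts.count i := by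
    by_contra! h
    refine hn ?_
    rw [← π.parts_sum, Finset.sum_multiset_count]
    exact Finset.dvd_sum fun i hi => (h i hi).mul_right i
  exact Finset.prod_eq_zero hi (hf _ hpi)

end GenFun

theorem twentyFour_mul_pentagonal_add_one_eq_sq {R : Type*} [CommRing R] (k : ℤ) :
    24 * (pentagonal k : R) + 1 = ((6 * k - 1 : ℤ) : R) ^ 2 := by
  have h := congrArg (Int.cast : ℤ → R) (two_mul_natCast_pentagonal k)
  push_cast at h ⊢
  linear_combination 12 * h

theorem coeff_expand_pentagonalSeries_mul_eq_zero {R : Type*} [CommRing R] {p q N : ℕ}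
    (hq : q ≠ 0) {ψ : R⟦X⟧} (hψ : ∀ j, ¬ p ∣ j → coeff j ψ = 0)
    (hN : ∀ k : ℤ, ¬ q * pentagonal k ≡ N [MOD p]) :
    coeff N (expand q hq (pentagonalSeries R) * ψ) = 0 := by
  rw [coeff_mul]
  refine Finset.sum_eq_zero fun ⟨i, j⟩ hij => ?_
  rw [Finset.HasAntidiagonal.mem_antidiagonal] at hij
  by_cases hj : p ∣ j
  · rw [coeff_expand]
    split_ifs with hqi
    · obtain ⟨l, rfl⟩ := hqi
      rw [Nat.mul_div_cancel_left _ (Nat.pos_of_ne_zero hq), coeff_pentagonalSeries_eq_zero,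
        zero_mul]
      rintro ⟨k, rfl⟩
      exact hN k ((Nat.modEq_iff_dvd' (by omega)).mpr (by simpa [← hij] using hj))
    · exact zero_mul _
  · rw [hψ j hj, mul_zero]

theorem not_modEq_pentagonal_of_not_isSquare {p a q t N : ℕ} [Fact p.Prime] (hpa : ¬ p ∣ a)
    (hqa : q ≡ a [MOD p]) (hN : N ≡ t [MOD p])
    (hqnr : ¬ IsSquare (24 * (t : ZMod p) * (a : ZMod p)⁻¹ + 1)) (k : ℤ) :
    ¬ q * pentagonal k ≡ N [MOD p] := by
  intro h
  have ha : (a : ZMod p) ≠ 0 := by rwa [Ne, ZMod.natCast_eq_zero_iff]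
  have ht : (t : ZMod p) = a * pentagonal k := by
    have := (ZMod.natCast_eq_natCast_iff _ _ _).mpr (hN.symm.trans h.symm)
    push_cast [(ZMod.natCast_eq_natCast_iff _ _ _).mpr hqa] at this
    exact this
  refine hqnr ⟨((6 * k - 1 : ℤ) : ZMod p), ?_⟩
  rw [← sq, ← twentyFour_mul_pentagonal_add_one_eq_sq, ht]
  field_simp

theorem count_condition_iff_xor {p a q M c : ℕ} (hpa : ¬ p ∣ a) (hqa : q ≡ a [MOD p]) :
    (∃ j, j < 2 ∧ c ≡ j * a [MOD p] ∧ j * q ≤ c ∧ c ≤ j * q + M) ↔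
      Xor (p ∣ c ∧ c ≤ M) (q ≤ c ∧ p ∣ c - q ∧ c - q ≤ M) := by
  have hshift (hqc : q ≤ c) : c ≡ a [MOD p] ↔ p ∣ c - q :=
    ⟨fun h => (Nat.modEq_iff_dvd' hqc).mp (hqa.trans h.symm),
      fun h => ((Nat.modEq_iff_dvd' hqc).mpr h).symm.trans hqa⟩
  have hdisj (hc : p ∣ c) : ¬ c ≡ a [MOD p] := fun h =>
    hpa (Nat.modEq_zero_iff_dvd.mp (h.symm.trans (Nat.modEq_zero_iff_dvd.mpr hc)))
  simp only [Nat.exists_lt_succ_right, Nat.lt_one_iff, exists_eq_left, zero_mul, one_mul,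
    zero_add, Nat.modEq_zero_iff_dvd, Xor]
  constructor
  · rintro (⟨hc, -, hM⟩ | ⟨hmod, hqc, hM⟩)
    · exact Or.inl ⟨⟨hc, hM⟩, fun ⟨hqc, hd, _⟩ => hdisj hc ((hshift hqc).mpr hd)⟩
    · exact Or.inr ⟨⟨hqc, (hshift hqc).mp hmod, by omega⟩, fun ⟨hc, _⟩ => hdisj hc hmod⟩
  · rintro (⟨⟨hc, hM⟩, -⟩ | ⟨⟨hqc, hd, hM⟩, -⟩)
    · exact Or.inl ⟨hc, Nat.zero_le c, hM⟩
    · exact Or.inr ⟨(hshift hqc).mpr hd, hqc, by omega⟩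

theorem ZMod.ite_xor_eq_sub (P Q : Prop) [Decidable P] [Decidable Q] :
    (if Xor P Q then 1 else 0 : ZMod 2) = (if P then 1 else 0) - if Q then 1 else 0 := by
  by_cases hP : P <;> by_cases hQ : Q <;> simp [hP, hQ]

theorem b_two_congruence_general (p a r m t : ℕ) (hp : p.Prime) (hpa : ¬ p ∣ a)
    (hqnr : ¬ IsSquare (24 * (t : ZMod p) * (a : ZMod p)⁻¹ + 1)) :
    ∀ n : ℕ, b p a r m 2 (p * n + t) % 2 = 0 := by
  intro n
  classical
  have : Fact p.Prime := ⟨hp⟩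
  set q := p * r + a
  have hq : q ≠ 0 := fun h => hpa (by simp [(Nat.add_eq_zero_iff.mp h).2])
  have hqa : q ≡ a [MOD p] := by simp [q, Nat.ModEq]
  let P (c : ℕ) : Prop := ∃ j, j < 2 ∧ c ≡ j * a [MOD p] ∧ j * q ≤ c ∧ c ≤ j * q + p * (m - 1)
  let g (c : ℕ) : ZMod 2 := if p ∣ c ∧ c ≤ p * (m - 1) then 1 else 0
  have hweight (c : ℕ) :
      (if P c then 1 else 0 : ZMod 2) = g c - if q ≤ c then g (c - q) else 0 := by
    simp only [P, count_condition_iff_xor hpa hqa, ZMod.ite_xor_eq_sub, g, ite_and]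
  have hb : (b p a r m 2 (p * n + t) : ZMod 2) =
      coeff (p * n + t) (Nat.Partition.genFun fun _ c => if P c then (1 : ZMod 2) else 0) :=
    Nat.Partition.natCast_card_eq_coeff_genFun P _
  suffices (b p a r m 2 (p * n + t) : ZMod 2) = 0 by
    simpa [ZMod.natCast_eq_zero_iff, Nat.dvd_iff_mod_eq_zero] using this
  rw [hb, funext₂ fun _ c => hweight c,
    Nat.Partition.genFun_sub_shift_eq_expand_pentagonalSeries_mul g (by simp [g]) _ hq]
  refine coeff_expand_pentagonalSeries_mul_eq_zero hq (fun j hj => ?_)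
    (not_modEq_pentagonal_of_not_isSquare hpa hqa (by simp [Nat.ModEq]) hqnr)
  exact Nat.Partition.coeff_genFun_eq_zero_of_not_dvd g (fun c hc => by simp [g, hc]) hj

/-- Let `p > 3` be prime, `a` a positive integer not divisible by `p`, `r ≥ 0`, `m ≥ 1`,
and let `0 ≤ t < p` be such that `24·t·a⁻¹ + 1` is a quadratic nonresidue modulo `p`
(`a⁻¹` being the inverse of `a` modulo `p`). Then `b_{2,r,a,m}(pn + t) ≡ 0 (mod 2)` for
all `n ≥ 0`. -/
theorem b_two_congruence (p a r m t : ℕ) (hp : p.Prime) (hp3 : 3 < p)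
    (ha : 0 < a) (hpa : ¬ p ∣ a) (hm : 1 ≤ m) (ht : t < p)
    (hqnr : ¬ IsSquare (24 * (t : ZMod p) * (a : ZMod p)⁻¹ + 1)) :
    ∀ n : ℕ, b p a r m 2 (p * n + t) % 2 = 0 :=
  b_two_congruence_general p a r m t hp hpa hqnr
end

section
/- As formal power series in q with integer coefficients, Σ_{n=0}^{∞} b_{v,r,a,m}(n) qⁿ = ∏_{n=1}^{∞} (1 − q^{v(pr+a)n})(1 − q^{pmn}) / ((1 − q^{(pr+a)n})(1 − q^{pn})). -/
open PowerSeries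

/-- The product topology on `ℤ⟦q⟧` (coefficientwise convergence with `ℤ` discrete); the
infinite products below, whose factors are `≡ 1 (mod q)`, converge in this topology (their
partial products stabilize coefficientwise), so their `tprod` is the q-adic limit. -/
noncomputable instance : TopologicalSpace (PowerSeries ℤ) :=
  inferInstanceAs (TopologicalSpace ((Unit →₀ ℕ) → ℤ))

/-- The multiplicative inverse of a power series whose constant coefficient is `1`. -/
noncomputable def psInv (f : PowerSeries ℤ) : PowerSeries ℤ := f.invOfUnit 1

/-!
A partition is determined by the multiplicities of its parts, so the generating function factors
as `∏_{i ≥ 1} ∑_{c ∈ C} q^{ic}`, where `C` is the set of admissible multiplicities. These are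
exactly the numbers `j(pr + a) + pt` with `j < v`, `t < m`, and they are pairwise distinct since
`j < v ≤ p` is recovered from the residue `ja mod p` (`a` being invertible mod `p`). Hence
`∑_{c ∈ C} x^c` is the product of two finite geometric series,
`(1 - x^{v(pr+a)}) / (1 - x^{pr+a}) · (1 - x^{pm}) / (1 - x^p)`.
-/

open Finset

section
variable {R : Type*} [CommSemiring R] [TopologicalSpace R] [T2Space R]
open scoped PowerSeries.WithPiTopology

theorem Nat.Partition.hasProd_powerSeriesMk_card_count_mem_s8 (M : Finset ℕ) (h0 : 0 ∈ M) :
    HasProd (fun i ↦ ∑ c ∈ M, (X : R⟦X⟧) ^ ((i + 1) * c))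
      (PowerSeries.mk fun n ↦
        (#{π : n.Partition | ∀ i ∈ π.parts, π.parts.count i ∈ M} : R)) := by
  convert! Nat.Partition.hasProd_genFun (fun _ c ↦ if c ∈ M then (1 : R) else 0) using 1
  · ext1 i
    set N := M.sup id
    have hM : M ⊆ range (N + 1) := fun c hc ↦ mem_range_succ_iff.2 (le_sup (f := id) hc)
    rw [tsum_eq_sum (s := range N) fun j hj ↦ ?_]
    · conv_lhs => rw [← inter_eq_right.2 hM, ← sum_ite_mem, sum_range_succ']
      simp [h0, ite_smul, add_comm]
    · have : j + 1 ∉ M := fun h ↦ hj (mem_range.2 (le_sup (f := id) h))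
      simp [this]
  · simp_rw [Nat.Partition.genFun, card_filter, Finsupp.prod, prod_boole]
    simp

end

theorem geom_sum_X_pow_eq_mul_psInv {d : ℕ} (hd : 0 < d) (w : ℕ) :
    ∑ j ∈ range w, (X : ℤ⟦X⟧) ^ (d * j) = (1 - X ^ (d * w)) * psInv (1 - X ^ d) := by
  have hinv : (1 - X ^ d) * psInv (1 - X ^ d) = 1 :=
    mul_invOfUnit _ 1 (by simp [hd.ne'])
  have hgeom := geom_sum_mul ((X : ℤ⟦X⟧) ^ d) w
  simp_rw [pow_mul]
  linear_combination -(∑ j ∈ range w, ((X : ℤ⟦X⟧) ^ d) ^ j) * hinv - psInv (1 - X ^ d) * hgeom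

theorem mul_add_add_mul_modEq (p a r j t : ℕ) : j * (p * r + a) + p * t ≡ j * a [MOD p] := by
  have : j * (p * r + a) + p * t = j * a + p * (j * r + t) := by ring
  rw [Nat.ModEq, this, Nat.add_mul_mod_self_left]

def multiplicitySet (p a r m v : ℕ) : Finset ℕ :=
  (range v ×ˢ range m).image fun x ↦ x.1 * (p * r + a) + p * x.2

section
variable {p a r m v : ℕ}

theorem zero_mem_multiplicitySet (hm : 1 ≤ m) (hv : 1 ≤ v) : 0 ∈ multiplicitySet p a r m v :=
  mem_image.2 ⟨(0, 0), mem_product.2 ⟨mem_range.2 hv, mem_range.2 hm⟩, by simp⟩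

theorem mem_multiplicitySet_iff (hp : 0 < p) (hm : 1 ≤ m) (N : ℕ) :
    N ∈ multiplicitySet p a r m v ↔ ∃ j, j < v ∧ N ≡ j * a [MOD p] ∧
      j * (p * r + a) ≤ N ∧ N ≤ j * (p * r + a) + p * (m - 1) := by
  simp only [multiplicitySet, mem_image, mem_product, mem_range, Prod.exists]
  constructor
  · rintro ⟨j, t, ⟨hj, ht⟩, rfl⟩
    exact ⟨j, hj, mul_add_add_mul_modEq p a r j t, Nat.le_add_right _ _,
      Nat.add_le_add_left (Nat.mul_le_mul_left p (by omega)) _⟩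
  · rintro ⟨j, hj, hmod, hle, hub⟩
    have hbase : j * (p * r + a) ≡ N [MOD p] := by
      simpa using (mul_add_add_mul_modEq p a r j 0).trans hmod.symm
    obtain ⟨t, ht⟩ := (Nat.modEq_iff_dvd' hle).1 hbase
    have htm : t < m := by
      have : p * t ≤ p * (m - 1) := by omega
      have := Nat.le_of_mul_le_mul_left this hp
      omega
    exact ⟨j, t, ⟨hj, htm⟩, by omega⟩

theorem injOn_multiplicitySet (hp : 0 < p) (hco : Nat.gcd a p = 1) (hvp : v ≤ p) :
    Set.InjOn (fun x : ℕ × ℕ ↦ x.1 * (p * r + a) + p * x.2) ↑(range v ×ˢ range m) := by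
  rintro ⟨j, t⟩ hjt ⟨j', t'⟩ hjt' h
  simp only [coe_product, Set.mem_prod, mem_coe, mem_range] at hjt hjt' h
  have hjj : j = j' := by
    have : j * a ≡ j' * a [MOD p] :=
      (mul_add_add_mul_modEq p a r j t).symm.trans (h ▸ mul_add_add_mul_modEq p a r j' t')
    exact (this.cancel_right_of_coprime (by rwa [Nat.gcd_comm])).eq_of_lt_of_lt
      (by omega) (by omega)
  subst hjj
  have : p * t = p * t' := by omega
  rw [Nat.eq_of_mul_eq_mul_left hp this]

theorem sum_X_pow_multiplicitySet (hp : 0 < p) (hco : Nat.gcd a p = 1) (hvp : v ≤ p) (i : ℕ) :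
    ∑ c ∈ multiplicitySet p a r m v, (X : ℤ⟦X⟧) ^ (i * c) =
      (∑ j ∈ range v, X ^ ((p * r + a) * i * j)) * ∑ t ∈ range m, X ^ (p * i * t) := by
  rw [multiplicitySet, sum_image (injOn_multiplicitySet hp hco hvp), sum_mul_sum, sum_product]
  exact sum_congr rfl fun j _ ↦ sum_congr rfl fun t _ ↦ by ring

end

/-- The generating function identity
`Σ_{n≥0} b_{v,r,a,m}(n) qⁿ
  = ∏_{n≥1} (1 - q^{v(pr+a)n})(1 - q^{pmn}) / ((1 - q^{(pr+a)n})(1 - q^{pn}))`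
(the product index below is shifted: `k + 1` plays the role of `n ≥ 1`). -/
theorem b_genFun (p a r m v : ℕ) (hp : 0 < p) (ha : 0 < a)
    (hco : Nat.gcd a p = 1) (hm : 1 ≤ m) (hv : 1 ≤ v) (hvp : v ≤ p) :
    PowerSeries.mk (fun n => (b p a r m v n : ℤ)) =
      ∏' k : ℕ,
        (1 - (X : PowerSeries ℤ) ^ (v * (p * r + a) * (k + 1))) *
          (1 - (X : PowerSeries ℤ) ^ (p * m * (k + 1))) *
          psInv (1 - (X : PowerSeries ℤ) ^ ((p * r + a) * (k + 1))) *
          psInv (1 - (X : PowerSeries ℤ) ^ (p * (k + 1))) := by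
  have hcard (n : ℕ) : #{π : n.Partition | ∀ i ∈ π.parts,
      π.parts.count i ∈ multiplicitySet p a r m v} = b p a r m v n := by
    rw [b, Nat.card_eq_fintype_card, Fintype.card_subtype]
    simp only [mem_multiplicitySet_iff hp hm]
  have hfactor (k : ℕ) :
      ∑ c ∈ multiplicitySet p a r m v, (X : ℤ⟦X⟧) ^ ((k + 1) * c) =
        (1 - X ^ (v * (p * r + a) * (k + 1))) * (1 - X ^ (p * m * (k + 1))) *
          psInv (1 - X ^ ((p * r + a) * (k + 1))) * psInv (1 - X ^ (p * (k + 1))) := by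
    rw [sum_X_pow_multiplicitySet hp hco hvp, geom_sum_X_pow_eq_mul_psInv (by positivity),
      geom_sum_X_pow_eq_mul_psInv (by positivity)]
    ring
  have hprod := Nat.Partition.hasProd_powerSeriesMk_card_count_mem_s8 (R := ℤ)
    (multiplicitySet p a r m v) (zero_mem_multiplicitySet hm hv)
  simp only [hcard, hfactor] at hprod
  -- the topology on `ℤ⟦X⟧` fixed above is definitionally the one of `WithPiTopology`
  open scoped PowerSeries.WithPiTopology in exact hprod.tprod_eq.symm
end

section
/- As formal power series in q with integer coefficients, (∏_{n=1}^{∞} (1 − q^{(pr+a)n})) · Σ_{n=0}^{∞} b_{v,r,a,m}(n) qⁿ = ∏_{n=1}^{∞} (1 − q^{v(pr+a)n})(1 − q^{pmn}) / (1 − q^{pn}). -/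
/-!
A partition counted by `b` is a choice, for each part size `i`, of a multiplicity in
`M = {j(pr + a) + pt | j < v, t < m}`, so `∑ b(n) qⁿ = ∏ᵢ ∑_{k ∈ M} q^{ik}`. As `gcd(a, p) = 1`
and `v ≤ p`, the residue of `k` mod `p` determines `j`, so each factor is the product of the
geometric sums `∑_{j<v} q^{(pr+a)ij}` and `∑_{t<m} q^{pit}`; multiplying by `1 - q^{(pr+a)i}`
sums both in closed form.
-/

open PowerSeries

open Finset

-- The topology of the statement is definitionally `PowerSeries.WithPiTopology`'s.
instance : T2Space (PowerSeries ℤ) := PowerSeries.WithPiTopology.instT2Space ℤ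

instance : IsTopologicalRing (PowerSeries ℤ) := PowerSeries.WithPiTopology.instIsTopologicalRing ℤ

theorem Nat.Partition.genFun_ite_eq_mk_card {R : Type*} [CommSemiring R] (P : ℕ → Prop)
    [DecidablePred P] :
    genFun (fun _ k ↦ if P k then (1 : R) else 0) =
      PowerSeries.mk fun n ↦ (#{π : n.Partition | ∀ i ∈ π.parts, P (π.parts.count i)} : R) := by
  simp_rw [genFun, card_filter, Finsupp.prod, prod_boole]
  simp

theorem one_add_tsum_ite_mem_eq_sum (S : Finset ℕ) (hS : 0 ∈ S) (i : ℕ) :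
    1 + ∑' j, (if j + 1 ∈ S then (1 : ℤ) else 0) • (X : PowerSeries ℤ) ^ (i * (j + 1)) =
      ∑ k ∈ S, X ^ (i * k) := by
  obtain ⟨N, hN⟩ : ∃ N, S ⊆ range (N + 1) :=
    ⟨S.sup id, fun k hk ↦ mem_range_succ_iff.2 (le_sup (f := id) hk)⟩
  have htail : ∀ j ∉ range N,
      (if j + 1 ∈ S then (1 : ℤ) else 0) • (X : PowerSeries ℤ) ^ (i * (j + 1)) = 0 := by
    intro j hj
    have : j + 1 ∉ S := fun h ↦ hj (by simpa using mem_range.1 (hN h))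
    simp [this]
  have hsum : ∑ k ∈ S, (X : PowerSeries ℤ) ^ (i * k) =
      ∑ k ∈ range (N + 1), if k ∈ S then X ^ (i * k) else 0 := by
    rw [sum_ite_mem, inter_eq_right.2 hN]
  rw [tsum_eq_sum htail, hsum, sum_range_succ']
  simp [hS, ite_smul, add_comm]

theorem hasProd_sum_X_pow_mul_mk_card (S : Finset ℕ) (hS : 0 ∈ S) :
    HasProd (fun k ↦ ∑ n ∈ S, (X : PowerSeries ℤ) ^ ((k + 1) * n))
      (PowerSeries.mk fun n ↦ (#{π : n.Partition | ∀ i ∈ π.parts, π.parts.count i ∈ S} : ℤ)) := by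
  have h : HasProd (fun k ↦ 1 + ∑' j, (if j + 1 ∈ S then (1 : ℤ) else 0) •
      (X : PowerSeries ℤ) ^ ((k + 1) * (j + 1)))
      (Nat.Partition.genFun fun _ n ↦ if n ∈ S then 1 else 0) :=
    Nat.Partition.hasProd_genFun fun _ n ↦ if n ∈ S then 1 else 0
  simpa only [Nat.Partition.genFun_ite_eq_mk_card, one_add_tsum_ite_mem_eq_sum S hS] using h

theorem multipliable_one_sub_X_pow_mul {c : ℕ} (hc : 0 < c) :
    Multipliable fun k ↦ (1 : PowerSeries ℤ) - X ^ (c * (k + 1)) := by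
  simp_rw [sub_eq_add_neg]
  apply PowerSeries.WithPiTopology.multipliable_one_add_of_tendsto_order_atTop_nhds_top
  refine ENat.tendsto_nhds_top_iff_natCast_lt.mpr fun n ↦ Filter.eventually_atTop.mpr ⟨n, ?_⟩
  intro k hk
  rw [PowerSeries.order_neg, PowerSeries.order_X_pow]
  norm_cast
  nlinarith

theorem geom_sum_eq_mul_psInv {f : PowerSeries ℤ} (hf : PowerSeries.constantCoeff f = 0)
    (m : ℕ) : ∑ t ∈ range m, f ^ t = (1 - f ^ m) * psInv (1 - f) := by
  have hinv : (1 - f) * psInv (1 - f) = 1 :=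
    PowerSeries.mul_invOfUnit _ 1 (by simp [hf])
  calc ∑ t ∈ range m, f ^ t = ((1 - f) * ∑ t ∈ range m, f ^ t) * psInv (1 - f) := by
        rw [mul_comm (1 - f), mul_assoc, hinv, mul_one]
    _ = (1 - f ^ m) * psInv (1 - f) := by rw [mul_neg_geom_sum]

theorem injOn_mul_add_mul {c p v : ℕ} (hc : c.Coprime p) (hvp : v ≤ p) (m : ℕ) :
    Set.InjOn (fun jt : ℕ × ℕ ↦ jt.1 * c + p * jt.2) ↑(range v ×ˢ range m) := by
  rintro ⟨j, t⟩ hjt ⟨j', t'⟩ hjt' h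
  simp only [coe_product, coe_range, Set.mem_prod, Set.mem_Iio] at hjt hjt' h
  have hmod : j * c ≡ j' * c [MOD p] := by
    simpa [Nat.ModEq, Nat.add_mul_mod_self_left] using congrArg (· % p) h
  have hj : j = j' :=
    Nat.ModEq.eq_of_lt_of_lt (hmod.cancel_right_of_coprime hc.symm) (by omega) (by omega)
  subst hj
  have ht : t = t' := Nat.eq_of_mul_eq_mul_left (by omega) (Nat.add_left_cancel h)
  rw [ht]

section Multiplicities

variable (p a r m v : ℕ)

def allowedMultiplicities : Finset ℕ :=
  (range v ×ˢ range m).image fun jt ↦ jt.1 * (p * r + a) + p * jt.2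

variable {p a r m v}

theorem mem_allowedMultiplicities_iff (hp : 0 < p) (hm : 1 ≤ m) {k : ℕ} :
    k ∈ allowedMultiplicities p a r m v ↔
      ∃ j, j < v ∧ k ≡ j * a [MOD p] ∧ j * (p * r + a) ≤ k ∧
        k ≤ j * (p * r + a) + p * (m - 1) := by
  have hmod : ∀ j t, j * (p * r + a) + p * t ≡ j * a [MOD p] := fun j t ↦ by
    simp [Nat.ModEq, show j * (p * r + a) + p * t = j * a + p * (j * r + t) by ring]
  simp only [allowedMultiplicities, mem_image, mem_product, mem_range, Prod.exists]
  constructor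
  · rintro ⟨j, t, ⟨hj, ht⟩, rfl⟩
    have : p * t ≤ p * (m - 1) := Nat.mul_le_mul_left p (by omega)
    exact ⟨j, hj, hmod j t, by omega, by omega⟩
  · rintro ⟨j, hj, hk, hle, hub⟩
    have hck : j * (p * r + a) ≡ k [MOD p] := by simpa using (hmod j 0).trans hk.symm
    obtain ⟨t, ht⟩ := (Nat.modEq_iff_dvd' hle).mp hck
    have htm : t ≤ m - 1 := Nat.le_of_mul_le_mul_left (by omega) hp
    exact ⟨j, t, ⟨hj, by omega⟩, by omega⟩

theorem b_eq_card (hp : 0 < p) (hm : 1 ≤ m) (n : ℕ) :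
    b p a r m v n =
      #{π : n.Partition | ∀ i ∈ π.parts, π.parts.count i ∈ allowedMultiplicities p a r m v} := by
  simp_rw [b, Nat.card_eq_fintype_card, Fintype.card_subtype, mem_allowedMultiplicities_iff hp hm]

theorem hasProd_mk_b (hp : 0 < p) (hm : 1 ≤ m) (hv : 1 ≤ v) :
    HasProd (fun k ↦ ∑ n ∈ allowedMultiplicities p a r m v, (X : PowerSeries ℤ) ^ ((k + 1) * n))
      (PowerSeries.mk fun n ↦ (b p a r m v n : ℤ)) := by
  simp_rw [b_eq_card hp hm]
  exact hasProd_sum_X_pow_mul_mk_card _ (mem_image.2 ⟨(0, 0), by simp; omega, by simp⟩)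

theorem sum_allowedMultiplicities_pow {R : Type*} [CommSemiring R] (hco : a.Coprime p)
    (hvp : v ≤ p) (f : R) :
    ∑ n ∈ allowedMultiplicities p a r m v, f ^ n =
      (∑ j ∈ range v, (f ^ (p * r + a)) ^ j) * ∑ t ∈ range m, (f ^ p) ^ t := by
  have hc : (p * r + a).Coprime p := (Nat.coprime_mul_left_add_left a p r).2 hco
  rw [allowedMultiplicities, sum_image (injOn_mul_add_mul hc hvp m), sum_product, sum_mul_sum]
  refine sum_congr rfl fun j _ ↦ sum_congr rfl fun t _ ↦ ?_
  rw [← pow_mul, ← pow_mul, ← pow_add, mul_comm (p * r + a)]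

theorem one_sub_X_pow_mul_sum_allowedMultiplicities (hp : 0 < p) (hco : a.Coprime p)
    (hvp : v ≤ p) (k : ℕ) :
    (1 - (X : PowerSeries ℤ) ^ ((p * r + a) * (k + 1))) *
        ∑ n ∈ allowedMultiplicities p a r m v, (X : PowerSeries ℤ) ^ ((k + 1) * n) =
      (1 - (X : PowerSeries ℤ) ^ (v * (p * r + a) * (k + 1))) *
        (1 - (X : PowerSeries ℤ) ^ (p * m * (k + 1))) *
        psInv (1 - (X : PowerSeries ℤ) ^ (p * (k + 1))) := by
  have hy : PowerSeries.constantCoeff (((X : PowerSeries ℤ) ^ (k + 1)) ^ p) = 0 := by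
    simp [hp.ne']
  simp_rw [pow_mul (X : PowerSeries ℤ) (k + 1), pow_mul' (X : PowerSeries ℤ) _ (k + 1),
    sum_allowedMultiplicities_pow hco hvp, pow_mul' _ v, pow_mul _ p m]
  rw [← mul_assoc, mul_neg_geom_sum, geom_sum_eq_mul_psInv hy, mul_assoc]

end Multiplicities

/-- The identity
`(∏_{n≥1} (1 - q^{(pr+a)n})) · Σ_{n≥0} b_{v,r,a,m}(n) qⁿ
  = ∏_{n≥1} (1 - q^{v(pr+a)n})(1 - q^{pmn}) / (1 - q^{pn})`
(product indices below are shifted: `k + 1` plays the role of `n ≥ 1`). -/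
theorem b_genFun_cleared (p a r m v : ℕ) (hp : 0 < p) (ha : 0 < a)
    (hco : Nat.gcd a p = 1) (hm : 1 ≤ m) (hv : 1 ≤ v) (hvp : v ≤ p) :
    (∏' k : ℕ, (1 - (X : PowerSeries ℤ) ^ ((p * r + a) * (k + 1)))) *
        PowerSeries.mk (fun n => (b p a r m v n : ℤ)) =
      ∏' k : ℕ,
        (1 - (X : PowerSeries ℤ) ^ (v * (p * r + a) * (k + 1))) *
          (1 - (X : PowerSeries ℤ) ^ (p * m * (k + 1))) *
          psInv (1 - (X : PowerSeries ℤ) ^ (p * (k + 1))) := by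
  have hb := hasProd_mk_b (a := a) (r := r) hp hm hv
  rw [← hb.tprod_eq, ← (multipliable_one_sub_X_pow_mul (by omega)).tprod_mul hb.multipliable]
  exact tprod_congr (one_sub_X_pow_mul_sum_allowedMultiplicities hp hco hvp)
end
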